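/- Let N ≥ 1, and let α, β ∈ ℝ with e^{iα} ≠ e^{iβ}. Consider the N×2 Vandermonde matrix V with entries V_{n,1} = e^{i n α} and V_{n,2} = e^{i n β} for n = 0, …, N−1. Then the eigenvalues of V*V are N + |sin(N(α−β)/2)/sin((α−β)/2)| and N − |sin(N(α−β)/2)/sin((α−β)/2)|. -/

import Mathlib

/-! The Gram matrix `Vᴴ * V` has both diagonal entries equal to `N` and off-diagonal entries
`z`, `conj z` with `z = ∑ n < N, e^{i n (α - β)}`. Summing this geometric series and using
`|e^{iθ} - 1| = 2 |sin (θ / 2)|` gives `|z| = |sin (N (α - β) / 2) / sin ((α - β) / 2)|`, and a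
`2 × 2` matrix with equal diagonal entries `a` and off-diagonal product `r ^ 2` has eigenvalues
`a ± r`. -/

open Complex Matrix

theorem Matrix.spectrum_fin_two_of_diag_eq {K : Type*} [Field K] (M : Matrix (Fin 2) (Fin 2) K)
    (a r : K) (h₀₀ : M 0 0 = a) (h₁₁ : M 1 1 = a) (h : M 0 1 * M 1 0 = r ^ 2) :
    spectrum K M = {a + r, a - r} := by
  ext x
  have hfactor : M.charpoly.eval x = (x - (a + r)) * (x - (a - r)) := by
    rw [charpoly_fin_two, trace_fin_two, det_fin_two, h₀₀, h₁₁, h]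
    simp only [Polynomial.eval_add, Polynomial.eval_sub, Polynomial.eval_mul, Polynomial.eval_pow,
      Polynomial.eval_X, Polynomial.eval_C]
    ring
  rw [mem_spectrum_iff_isRoot_charpoly, Polynomial.IsRoot.def, hfactor, mul_eq_zero, sub_eq_zero,
    sub_eq_zero, Set.mem_insert_iff, Set.mem_singleton_iff]

theorem norm_geom_sum_exp_mul_I (θ : ℝ) (N : ℕ) (h : exp (I * θ) ≠ 1) :
    ‖∑ n ∈ Finset.range N, exp (I * θ) ^ n‖ = |Real.sin (N * θ / 2) / Real.sin (θ / 2)| := by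
  have hpow : exp (I * θ) ^ N = exp (I * (N * θ : ℝ)) := by
    rw [← exp_nat_mul]; push_cast; ring_nf
  rw [geom_sum_eq h, norm_div, hpow, norm_exp_I_mul_ofReal_sub_one,
    norm_exp_I_mul_ofReal_sub_one, Real.norm_eq_abs, Real.norm_eq_abs, abs_mul, abs_mul, abs_div,
    mul_div_mul_left _ _ (by norm_num)]

theorem star_exp_mul_exp (n : ℕ) (x y : ℝ) :
    star (exp (I * n * x)) * exp (I * n * y) = exp (I * (y - x)) ^ n := by
  rw [RCLike.star_def, ← exp_conj, ← exp_add, ← exp_nat_mul]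
  simp only [map_mul, conj_I, conj_natCast, conj_ofReal]
  ring_nf

theorem conjTranspose_mul_self_apply_of_exp {m : Type*} [Fintype m] {N : ℕ} (θ : m → ℝ)
    (V : Matrix (Fin N) m ℂ) (hV : ∀ n j, V n j = exp (I * n * θ j)) (i j : m) :
    (Vᴴ * V) i j = ∑ n ∈ Finset.range N, exp (I * (θ j - θ i)) ^ n := by
  simp only [mul_apply, conjTranspose_apply, hV, star_exp_mul_exp]
  exact Fin.sum_univ_eq_sum_range (fun n => exp (I * (θ j - θ i)) ^ n) N

theorem stmt1_general (N : ℕ) (α β : ℝ)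
    (hdist : Complex.exp (I * α) ≠ Complex.exp (I * β))
    (V : Matrix (Fin N) (Fin 2) ℂ)
    (hV : ∀ n : Fin N, V n 0 = Complex.exp (I * n * α) ∧ V n 1 = Complex.exp (I * n * β)) :
    spectrum ℂ (Vᴴ * V) =
      {((N + |Real.sin (N * (α - β) / 2) / Real.sin ((α - β) / 2)| : ℝ) : ℂ),
       ((N - |Real.sin (N * (α - β) / 2) / Real.sin ((α - β) / 2)| : ℝ) : ℂ)} := by
  have hgram := conjTranspose_mul_self_apply_of_exp ![α, β] V fun n j => by
    fin_cases j
    exacts [(hV n).1, (hV n).2]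
  have hne : exp (I * (α - β : ℝ)) ≠ 1 := by
    rw [ofReal_sub, mul_sub, exp_sub]
    exact div_ne_one_of_ne hdist
  have hoff : (Vᴴ * V) 0 1 * (Vᴴ * V) 1 0
      = ((|Real.sin (N * (α - β) / 2) / Real.sin ((α - β) / 2)| : ℝ) : ℂ) ^ 2 := by
    rw [← (isHermitian_conjTranspose_mul_self V).apply 0 1, RCLike.star_def, conj_mul', hgram]
    congr 2
    simpa using norm_geom_sum_exp_mul_I _ N hne
  push_cast
  exact spectrum_fin_two_of_diag_eq _ _ _ (by simp [hgram]) (by simp [hgram]) hoff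

theorem stmt1 (N : ℕ) (hN : 1 ≤ N) (α β : ℝ)
    (hdist : Complex.exp (I * α) ≠ Complex.exp (I * β))
    (V : Matrix (Fin N) (Fin 2) ℂ)
    (hV : ∀ n : Fin N, V n 0 = Complex.exp (I * n * α) ∧ V n 1 = Complex.exp (I * n * β)) :
    spectrum ℂ (Vᴴ * V) =
      {((N + |Real.sin (N * (α - β) / 2) / Real.sin ((α - β) / 2)| : ℝ) : ℂ),
       ((N - |Real.sin (N * (α - β) / 2) / Real.sin ((α - β) / 2)| : ℝ) : ℂ)} :=
  stmt1_general N α β hdist V hV
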